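/- If P is an earliest arrival path from s to z with dep(P) ≥ rt (i.e., arr(P) is minimum among all time-respecting paths from s to z departing at or after time rt), then there exists a useful dominating path Q from s to z with the same route as P, dep(Q) = dep(P), and arr(Q) = arr(P). -/

import Mathlib

/-- A temporal edge with tail, head, departure time and arrival time. -/
structure TEdge (V : Type) where
  tail : V
  head : V
  dep : ℕ
  arr : ℕ

/-- A temporal graph: a set of temporal edges, each with arrival strictly after departure. -/
structure TGraph (V : Type) where
  edges : Set (TEdge V)
  valid : ∀ e ∈ edges, e.dep < e.arr

variable {V : Type}

/-- Time-respecting path: nonempty sequence of edges of `G`, consecutive edges share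
endpoints and each edge departs no earlier than the previous edge arrives. -/
def TRP (G : TGraph V) (p : List (TEdge V)) : Prop :=
  p ≠ [] ∧ (∀ e ∈ p, e ∈ G.edges) ∧
    List.Chain' (fun e f => e.head = f.tail ∧ e.arr ≤ f.dep) p

/-- Departure time of a path (departure of its first edge). -/
def pdep (p : List (TEdge V)) : ℕ := (p.head?.elim 0 TEdge.dep)

/-- Arrival time of a path (arrival of its last edge). -/
def parr (p : List (TEdge V)) : ℕ := (p.getLast?.elim 0 TEdge.arr)

/-- Start vertex of a path. -/
def startV (p : List (TEdge V)) : Option V := p.head?.map TEdge.tail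

/-- End vertex of a path. -/
def endV (p : List (TEdge V)) : Option V := p.getLast?.map TEdge.head

/-- The route (sequence of vertices) a path goes through. -/
def routeOf (p : List (TEdge V)) : List V :=
  p.map TEdge.tail ++ (p.getLast?.elim [] fun e => [e.head])

/-- `ℙ(s,z,r,t)`: time-respecting paths from `s` to `z` through route `r` departing at `t`. -/
def PathsIn (G : TGraph V) (s z : V) (r : List V) (t : ℕ) : Set (List (TEdge V)) :=
  {p | TRP G p ∧ startV p = some s ∧ endV p = some z ∧ routeOf p = r ∧ pdep p = t}

/-- Dominating path in `ℙ(s,z,r,t)`. -/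
def DominatingIn (G : TGraph V) (s z : V) (r : List V) (t : ℕ) (p : List (TEdge V)) : Prop :=
  p ∈ PathsIn G s z r t ∧ ∀ q ∈ PathsIn G s z r t, parr p ≤ parr q

/-- A path is dominating with respect to its own start vertex, route and departure time. -/
def DomSelf (G : TGraph V) (p : List (TEdge V)) : Prop :=
  TRP G p ∧ ∀ q, TRP G q → startV q = startV p → routeOf q = routeOf p →
    pdep q = pdep p → parr p ≤ parr q

/-- Useful dominating path: every (nonempty) prefix is dominating on its own route
and departure time. -/
def UsefulDom (G : TGraph V) (p : List (TEdge V)) : Prop :=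
  ∀ j, 1 ≤ j → j ≤ p.length → DomSelf G (p.take j)

/-- The edge relation of the edge-scan-dependency graph: `v_e → v_f` iff `f` departs
from the head of `e` no earlier than `e` arrives and no parallel edge with the same
endpoints departs no earlier than `arr e` and arrives strictly before `f`. -/
def ESDGAdj (G : TGraph V) (e f : TEdge V) : Prop :=
  e ∈ G.edges ∧ f ∈ G.edges ∧ e.head = f.tail ∧ e.arr ≤ f.dep ∧
    ¬ ∃ g ∈ G.edges, g.tail = f.tail ∧ g.head = f.head ∧ e.arr ≤ g.dep ∧ g.arr < f.arr

/-- A directed path in the ESDG, given as the corresponding sequence of temporal edges. -/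
def ESDGPath (G : TGraph V) (p : List (TEdge V)) : Prop :=
  p ≠ [] ∧ (∀ e ∈ p, e ∈ G.edges) ∧ List.Chain' (ESDGAdj G) p

/-- Earliest arrival path from `s` to `z` with ready time `rt`. -/
def EAPath (G : TGraph V) (s z : V) (rt : ℕ) (p : List (TEdge V)) : Prop :=
  TRP G p ∧ startV p = some s ∧ endV p = some z ∧ rt ≤ pdep p ∧
    ∀ q, TRP G q → startV q = some s → endV q = some z → rt ≤ pdep q → parr p ≤ parr q

/-- Fastest path from `s` to `z`: minimizes journey time `arr - dep`. -/
def FastestPath (G : TGraph V) (s z : V) (p : List (TEdge V)) : Prop :=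
  TRP G p ∧ startV p = some s ∧ endV p = some z ∧
    ∀ q, TRP G q → startV q = some s → endV q = some z →
      parr p - pdep p ≤ parr q - pdep q

/-! Rebuild `P` greedily along its route: the first edge is replaced by an earliest-arriving
parallel edge with the same departure time, and each further edge by an earliest-arriving
parallel edge departing no earlier than the current arrival. Every prefix built this way is
dominating, since a competitor on the same route reaches the last vertex no earlier, so its
last edge was among the candidates. The greedy path arrives no later than `P`, hence exactly
when `P` does, `P` being an earliest arrival path. -/

lemma TEdge.exists_forall_arr_le {S : Set (TEdge V)} (h : S.Nonempty) :
    ∃ f ∈ S, ∀ g ∈ S, f.arr ≤ g.arr :=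
  ⟨Function.argminOn TEdge.arr S h, Function.argminOn_mem _ _ h,
    fun _ hg => Function.argminOn_le _ _ hg⟩

section PathBasics

variable {G : TGraph V} {l p : List (TEdge V)} {e : TEdge V}

lemma parr_append_singleton (l : List (TEdge V)) (e : TEdge V) : parr (l ++ [e]) = e.arr := by
  simp [parr]

lemma pdep_append_singleton (hl : l ≠ []) (e : TEdge V) : pdep (l ++ [e]) = pdep l := by
  cases l with
  | nil => exact absurd rfl hl
  | cons a t => simp [pdep]

lemma routeOf_singleton (e : TEdge V) : routeOf [e] = [e.tail, e.head] := by
  simp [routeOf]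

lemma routeOf_append_singleton (hl : endV l = some e.tail) :
    routeOf (l ++ [e]) = routeOf l ++ [e.head] := by
  obtain ⟨l', a, rfl⟩ :=
    (List.eq_nil_or_concat' l).resolve_left (by rintro rfl; simp [endV] at hl)
  simp only [endV, List.getLast?_append, List.getLast?_singleton, Option.some_or,
    Option.map_some, Option.some.injEq] at hl
  simp [routeOf, hl]

lemma length_routeOf (hp : p ≠ []) : (routeOf p).length = p.length + 1 := by
  obtain ⟨l, a, rfl⟩ := (List.eq_nil_or_concat' p).resolve_left hp
  simp [routeOf]

lemma head?_routeOf (p : List (TEdge V)) : (routeOf p).head? = startV p := by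
  cases p <;> simp [routeOf, startV]

lemma getLast?_routeOf (p : List (TEdge V)) : (routeOf p).getLast? = endV p := by
  rcases List.eq_nil_or_concat' p with rfl | ⟨l, a, rfl⟩ <;> simp [routeOf, endV]

lemma trp_singleton_iff : TRP G [e] ↔ e ∈ G.edges := by
  simp [TRP, List.Chain']

lemma trp_append_singleton_iff (hl : l ≠ []) :
    TRP G (l ++ [e]) ↔
      TRP G l ∧ e ∈ G.edges ∧ endV l = some e.tail ∧ parr l ≤ e.dep := by
  simp only [TRP, List.Chain', List.isChain_append, List.isChain_singleton,
    List.getLast?_eq_some_getLast hl, endV, parr, ne_eq, List.append_eq_nil_iff,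
    List.cons_ne_nil, and_false, not_false_eq_true,
    List.mem_append, List.mem_singleton, or_imp, forall_and, forall_eq, true_and, hl,
    Option.mem_def, Option.some.injEq, List.head?_cons, Option.map_some, Option.elim_some,
    forall_eq']
  tauto

end PathBasics

section Domination

variable {G : TGraph V} {p q : List (TEdge V)} {f : TEdge V}

lemma usefulDom_nil : UsefulDom G [] :=
  fun _ hj₁ hj₂ => absurd (hj₁.trans hj₂) (by simp)

lemma UsefulDom.domSelf (hp : UsefulDom G p) (hne : p ≠ []) : DomSelf G p := by
  simpa using hp p.length (List.length_pos_iff.mpr hne) le_rfl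

lemma UsefulDom.append_singleton (hp : UsefulDom G p) (hf : DomSelf G (p ++ [f])) :
    UsefulDom G (p ++ [f]) := by
  intro j hj₁ hj₂
  rw [List.length_append, List.length_singleton] at hj₂
  rcases Nat.lt_or_eq_of_le hj₂ with hj | rfl
  · rw [List.take_append_of_le_length (by omega)]
    exact hp j hj₁ (by omega)
  · rwa [List.take_of_length_le (by simp)]

lemma domSelf_singleton (hf : f ∈ G.edges)
    (hmin : ∀ g ∈ G.edges, g.tail = f.tail → g.head = f.head → g.dep = f.dep →
      f.arr ≤ g.arr) :
    DomSelf G [f] := by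
  refine ⟨trp_singleton_iff.mpr hf, fun r hr _ hroute hdep => ?_⟩
  obtain ⟨g, rfl⟩ : ∃ g, r = [g] := by
    have hlen := length_routeOf hr.1
    rw [hroute, routeOf_singleton] at hlen
    exact List.length_eq_one_iff.mp (by simpa using hlen.symm)
  rw [routeOf_singleton, routeOf_singleton, List.cons.injEq, List.cons.injEq] at hroute
  exact hmin g (trp_singleton_iff.mp hr) hroute.1 hroute.2.1 hdep

lemma DomSelf.append_singleton (hq : DomSelf G q) (hf : f ∈ G.edges)
    (htail : endV q = some f.tail) (hdep : parr q ≤ f.dep)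
    (hmin : ∀ g ∈ G.edges, g.tail = f.tail → g.head = f.head → parr q ≤ g.dep →
      f.arr ≤ g.arr) :
    DomSelf G (q ++ [f]) := by
  have hq₀ := hq.1.1
  refine ⟨(trp_append_singleton_iff hq₀).mpr ⟨hq.1, hf, htail, hdep⟩,
    fun r hr _ hroute hrdep => ?_⟩
  obtain ⟨r', g, rfl⟩ := (List.eq_nil_or_concat' r).resolve_left hr.1
  have hr'₀ : r' ≠ [] := by
    rintro rfl
    have hlen := congrArg List.length hroute
    rw [List.nil_append, routeOf_singleton, routeOf_append_singleton htail,
      List.length_append, length_routeOf hq₀] at hlen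
    exact hq₀ (List.length_eq_zero_iff.mp (by simpa using hlen))
  obtain ⟨hr', hg, hgtail, hgdep⟩ := (trp_append_singleton_iff hr'₀).mp hr
  rw [routeOf_append_singleton hgtail, routeOf_append_singleton htail] at hroute
  obtain ⟨hroute', hhead⟩ := List.append_inj' hroute rfl
  have htail' : g.tail = f.tail := Option.some_injective _ <| by
    rw [← hgtail, ← htail, ← getLast?_routeOf, hroute', getLast?_routeOf]
  have hstart : startV r' = startV q := by
    rw [← head?_routeOf, hroute', head?_routeOf]
  have hdep' : pdep r' = pdep q := by
    rw [← pdep_append_singleton hr'₀ g, hrdep, pdep_append_singleton hq₀]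
  rw [parr_append_singleton, parr_append_singleton]
  have hdom : parr q ≤ parr r' := hq.2 r' hr' hstart hroute' hdep'
  exact hmin g hg htail' (List.singleton_inj.mp hhead) (hdom.trans hgdep)

end Domination

lemma exists_usefulDom_routeOf_eq {G : TGraph V} {p : List (TEdge V)} (hp : TRP G p) :
    ∃ q, TRP G q ∧ routeOf q = routeOf p ∧ pdep q = pdep p ∧ parr q ≤ parr p ∧
      UsefulDom G q := by
  induction p using List.reverseRecOn with
  | nil => exact absurd rfl hp.1
  | append_singleton l e ih =>
    rcases eq_or_ne l [] with rfl | hl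
    · have he := trp_singleton_iff.mp hp
      obtain ⟨f, ⟨hf, htail, hhead, hdep⟩, hmin⟩ := TEdge.exists_forall_arr_le
        (S := {g | g ∈ G.edges ∧ g.tail = e.tail ∧ g.head = e.head ∧ g.dep = e.dep})
        ⟨e, he, rfl, rfl, rfl⟩
      refine ⟨[f], trp_singleton_iff.mpr hf, by simp [routeOf_singleton, htail, hhead], hdep,
        hmin e ⟨he, rfl, rfl, rfl⟩, usefulDom_nil.append_singleton ?_⟩
      exact domSelf_singleton hf fun g hg h₁ h₂ h₃ =>
        hmin g ⟨hg, h₁.trans htail, h₂.trans hhead, h₃.trans hdep⟩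
    · obtain ⟨hl', he, hetail, hedep⟩ := (trp_append_singleton_iff hl).mp hp
      obtain ⟨q, hq, hroute, hdep, harr, huse⟩ := ih hl'
      have heS :
          e ∈ {g | g ∈ G.edges ∧ g.tail = e.tail ∧ g.head = e.head ∧ parr q ≤ g.dep} :=
        ⟨he, rfl, rfl, harr.trans hedep⟩
      obtain ⟨f, ⟨hf, htail, hhead, hfdep⟩, hmin⟩ := TEdge.exists_forall_arr_le ⟨e, heS⟩
      have hqf : endV q = some f.tail := by
        rw [htail, ← getLast?_routeOf, hroute, getLast?_routeOf, hetail]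
      refine ⟨q ++ [f], (trp_append_singleton_iff hq.1).mpr ⟨hq, hf, hqf, hfdep⟩, ?_, ?_, ?_,
        huse.append_singleton ?_⟩
      · rw [routeOf_append_singleton hqf, routeOf_append_singleton hetail, hroute, hhead]
      · rw [pdep_append_singleton hq.1, pdep_append_singleton hl, hdep]
      · rw [parr_append_singleton, parr_append_singleton]
        exact hmin e heS
      · exact (huse.domSelf hq.1).append_singleton hf hqf hfdep fun g hg h₁ h₂ h₃ =>
          hmin g ⟨hg, h₁.trans htail, h₂.trans hhead, h₃⟩

theorem stmt2 (G : TGraph V) (s z : V) (rt : ℕ) (P : List (TEdge V))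
    (hP : EAPath G s z rt P) :
    ∃ Q, TRP G Q ∧ startV Q = some s ∧ endV Q = some z ∧
      routeOf Q = routeOf P ∧ pdep Q = pdep P ∧ parr Q = parr P ∧ UsefulDom G Q := by
  obtain ⟨hP, hs, hz, hrt, hearliest⟩ := hP
  obtain ⟨Q, hQ, hroute, hdep, harr, huse⟩ := exists_usefulDom_routeOf_eq hP
  have hQs : startV Q = some s := by rw [← head?_routeOf, hroute, head?_routeOf, hs]
  have hQz : endV Q = some z := by rw [← getLast?_routeOf, hroute, getLast?_routeOf, hz]
  exact ⟨Q, hQ, hQs, hQz, hroute, hdep,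
    harr.antisymm (hearliest Q hQ hQs hQz (hdep ▸ hrt)), huse⟩
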